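/- arXiv:2403.16651 — 2 statements merged into one kernel-verified Lean document; each statement's English description precedes it below -/
import Mathlib

section
/- For each p ∈ (0,1), the function η ↦ kl(p+η‖p) is a strictly increasing continuous bijection from [0, 1−p] onto [0, log(1/p)]. Consequently, for every ε > 0: if p ∈ (0, e^{−ε}] there is a unique η ∈ [0, 1−p] with kl(p+η‖p) = ε, and if p ∈ (e^{−ε}, 1] then kl(p+η‖p) < ε for all η ∈ [0, 1−p]. -/
/-!
On `[p, 1]` the derivative of `a ↦ kl(a‖p)` is `log (a / p) - log ((1 - a) / (1 - p))`,
positive in the interior, so the map is strictly increasing there, and by the intermediate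
value theorem it maps `[p, 1]` bijectively onto `[kl(p‖p), kl(1‖p)] = [0, log (1 / p)]`.
The dichotomy in `ε` is the comparison of `ε` with `log (1 / p)`.
-/

open Real

/-- Bernoulli Kullback–Leibler divergence `kl(a‖b)`. -/
noncomputable def klBer (a b : ℝ) : ℝ :=
  a * Real.log (a / b) + (1 - a) * Real.log ((1 - a) / (1 - b))

open Set

lemma Set.BijOn.existsUnique_eq {α β : Type*} {f : α → β} {s : Set α} {t : Set β}
    (h : BijOn f s t) {y : β} (hy : y ∈ t) : ∃! x, x ∈ s ∧ f x = y := by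
  obtain ⟨x, hx, rfl⟩ := h.surjOn hy
  exact ⟨x, ⟨hx, rfl⟩, fun x' ⟨hx', hfx'⟩ => h.injOn hx' hx hfx'⟩

lemma StrictMonoOn.bijOn_Icc {α δ : Type*} [ConditionallyCompleteLinearOrder α]
    [TopologicalSpace α] [OrderTopology α] [DenselyOrdered α] [LinearOrder δ]
    [TopologicalSpace δ] [OrderClosedTopology δ] {f : α → δ} {a b : α}
    (hf : StrictMonoOn f (Icc a b)) (hcont : ContinuousOn f (Icc a b)) (hab : a ≤ b) :
    BijOn f (Icc a b) (Icc (f a) (f b)) := by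
  rw [← hcont.image_Icc_of_monotoneOn hab hf.monotoneOn]
  exact hf.injOn.bijOn_image

lemma mul_log_div (x : ℝ) {y : ℝ} (hy : y ≠ 0) : x * log (x / y) = x * log x - x * log y := by
  rcases eq_or_ne x 0 with rfl | hx
  · simp
  · rw [log_div hx hy, mul_sub]

lemma klBer_self (b : ℝ) : klBer b b = 0 := by
  rcases eq_or_ne b 0 with rfl | hb₀
  · simp [klBer]
  rcases eq_or_ne b 1 with rfl | hb₁
  · simp [klBer]
  simp [klBer, hb₀, sub_ne_zero.2 hb₁.symm]

lemma klBer_one_left (b : ℝ) : klBer 1 b = log (1 / b) := by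
  simp [klBer]

section klBer

variable {b : ℝ}

lemma klBer_eq (a : ℝ) (hb₀ : b ≠ 0) (hb₁ : b ≠ 1) :
    klBer a b = a * log a - a * log b + ((1 - a) * log (1 - a) - (1 - a) * log (1 - b)) := by
  rw [klBer, mul_log_div a hb₀, mul_log_div (1 - a) (sub_ne_zero.2 hb₁.symm)]

lemma continuous_klBer_left (hb₀ : b ≠ 0) (hb₁ : b ≠ 1) : Continuous (klBer · b) := by
  simp_rw [klBer_eq _ hb₀ hb₁]
  have := continuous_mul_log.comp (continuous_sub_left (1 : ℝ))
  fun_prop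

lemma hasDerivAt_klBer_left {a : ℝ} (ha₀ : a ≠ 0) (ha₁ : a ≠ 1) (hb₀ : b ≠ 0) (hb₁ : b ≠ 1) :
    HasDerivAt (klBer · b) (log a - log b - (log (1 - a) - log (1 - b))) a := by
  simp_rw [klBer_eq _ hb₀ hb₁]
  have h₁ := hasDerivAt_mul_log ha₀
  have h₂ := (hasDerivAt_mul_log (sub_ne_zero.2 ha₁.symm)).comp a ((hasDerivAt_id a).const_sub 1)
  exact ((h₁.sub ((hasDerivAt_id a).mul_const (log b))).add
    (h₂.sub (((hasDerivAt_id a).const_sub 1).mul_const (log (1 - b))))).congr_deriv (by ring)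

lemma klBer_strictMonoOn_Icc (hb : b ∈ Ioo 0 1) : StrictMonoOn (klBer · b) (Icc b 1) := by
  obtain ⟨hb₀, hb₁⟩ := hb
  refine strictMonoOn_of_hasDerivWithinAt_pos (convex_Icc b 1)
    (continuous_klBer_left hb₀.ne' hb₁.ne).continuousOn
    (f' := fun a => log a - log b - (log (1 - a) - log (1 - b))) (fun a ha => ?_) (fun a ha => ?_)
    <;> obtain ⟨hba, ha₁⟩ : b < a ∧ a < 1 := by rwa [interior_Icc] at ha
  · exact (hasDerivAt_klBer_left (hb₀.trans hba).ne' ha₁.ne hb₀.ne' hb₁.ne).hasDerivWithinAt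
  · have := log_lt_log hb₀ hba
    have := log_lt_log (sub_pos.2 ha₁) (sub_lt_sub_left hba 1)
    linarith

end klBer

/-- **Lemma 5**: for `p ∈ (0,1)`, the map `η ↦ kl(p+η‖p)` is a strictly increasing
continuous bijection from `[0, 1-p]` onto `[0, log(1/p)]`. Consequently, for every
`ε > 0`: if `p ≤ e^{-ε}` there is a unique `η ∈ [0, 1-p]` with `kl(p+η‖p) = ε`, and
if `p > e^{-ε}` then `kl(p+η‖p) < ε` for all `η ∈ [0, 1-p]`. -/
theorem kl_strictMono_bijective (p : ℝ) (hp : p ∈ Set.Ioo (0 : ℝ) 1) :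
    StrictMonoOn (fun η => klBer (p + η) p) (Set.Icc 0 (1 - p)) ∧
    ContinuousOn (fun η => klBer (p + η) p) (Set.Icc 0 (1 - p)) ∧
    Set.BijOn (fun η => klBer (p + η) p) (Set.Icc 0 (1 - p))
      (Set.Icc 0 (Real.log (1 / p))) ∧
    (∀ ε : ℝ, 0 < ε →
      (p ≤ Real.exp (-ε) →
        ∃! η : ℝ, η ∈ Set.Icc 0 (1 - p) ∧ klBer (p + η) p = ε) ∧
      (Real.exp (-ε) < p →
        ∀ η ∈ Set.Icc (0 : ℝ) (1 - p), klBer (p + η) p < ε)) := by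
  obtain ⟨hp₀, hp₁⟩ := hp
  have hmaps : MapsTo (p + ·) (Icc 0 (1 - p)) (Icc p 1) :=
    fun η hη => ⟨by linarith [hη.1], by linarith [hη.2]⟩
  have hmono : StrictMonoOn (fun η => klBer (p + η) p) (Icc 0 (1 - p)) :=
    (klBer_strictMonoOn_Icc ⟨hp₀, hp₁⟩).comp (add_right_strictMono.strictMonoOn _) hmaps
  have hcont : ContinuousOn (fun η => klBer (p + η) p) (Icc 0 (1 - p)) :=
    ((continuous_klBer_left hp₀.ne' hp₁.ne).comp (continuous_const_add p)).continuousOn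
  have hbij : BijOn (fun η => klBer (p + η) p) (Icc 0 (1 - p)) (Icc 0 (log (1 / p))) := by
    simpa [klBer_self, klBer_one_left] using hmono.bijOn_Icc hcont (by linarith)
  have hlog : log (1 / p) = -log p := by rw [one_div, log_inv]
  refine ⟨hmono, hcont, hbij, fun ε hε => ⟨fun hle => hbij.existsUnique_eq ⟨hε.le, ?_⟩,
    fun hlt η hη => (hbij.mapsTo hη).2.trans_lt ?_⟩⟩
  · rw [hlog, le_neg, log_le_iff_le_exp hp₀]
    exact hle
  · rw [hlog, neg_lt, lt_log_iff_exp_lt hp₀]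
    exact hlt
end

section
/- For every ε > 0 and every λ > 0, the function r ↦ Δ_ε(r,λ) is strictly concave on (0,1]; in particular its second derivative in r is strictly negative for all r ∈ (0,1). -/
/-!
Write `C = log (1 + λ) + ε > 0` and `w r = r (r + λ) log (1 + λ/r)²`. Then `Δ_ε' = C λ / w - 1`, so
`Δ_ε'' = -C λ w' / w²`, and `w' = log (1 + λ/r) ((2r + λ) log (1 + λ/r) - 2λ)` is positive by the
classical bound `log (1 + t) > 2t / (t + 2)` at `t = λ/r`.
-/

open Real

/-- `Δ_ε(r, λ) = (log(1+λ) + ε)/log(1 + λ/r) - r`. -/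
noncomputable def DeltaEps (ε r lam : ℝ) : ℝ :=
  (Real.log (1 + lam) + ε) / Real.log (1 + lam / r) - r

open Filter Topology Set

section

variable {ε lam r : ℝ}

theorem hasDerivAt_log_one_add_div (hr : r ≠ 0) (hrl : r + lam ≠ 0) :
    HasDerivAt (fun r => log (1 + lam / r)) (-lam / (r * (r + lam))) r := by
  have hpos : 1 + lam / r ≠ 0 := by
    rwa [one_add_div hr, div_ne_zero_iff, and_iff_left hr]
  convert (((hasDerivAt_inv hr).const_mul lam).const_add 1).log hpos using 1
  · simp [div_eq_mul_inv]
  · field_simp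

theorem two_mul_lt_mul_log_one_add_div (hlam : 0 < lam) (hr : 0 < r) :
    2 * lam < (2 * r + lam) * log (1 + lam / r) := by
  have h := lt_log_one_add_of_pos (div_pos hlam hr)
  rw [div_lt_iff₀ (by positivity)] at h
  calc 2 * lam = r * (2 * (lam / r)) := by field_simp
    _ < r * (log (1 + lam / r) * (lam / r + 2)) := by gcongr
    _ = (2 * r + lam) * log (1 + lam / r) := by field_simp; ring

theorem hasDerivAt_mul_log_one_add_div_sq (hlam : 0 < lam) (hr : 0 < r) :
    HasDerivAt (fun r => r * (r + lam) * log (1 + lam / r) ^ 2)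
      (log (1 + lam / r) * ((2 * r + lam) * log (1 + lam / r) - 2 * lam)) r := by
  have hg := hasDerivAt_log_one_add_div hr.ne' (by positivity : r + lam ≠ 0)
  refine (((hasDerivAt_id' r).mul ((hasDerivAt_id' r).add_const lam)).mul
    (hg.pow 2)).congr_deriv ?_
  simp only [Pi.mul_apply, Pi.pow_apply]
  field_simp
  ring

theorem hasDerivAt_DeltaEps (hlam : 0 < lam) (hr : 0 < r) :
    HasDerivAt (fun r => DeltaEps ε r lam)
      ((log (1 + lam) + ε) * lam / (r * (r + lam) * log (1 + lam / r) ^ 2) - 1) r := by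
  have hg := hasDerivAt_log_one_add_div hr.ne' (by positivity : r + lam ≠ 0)
  have hg0 : log (1 + lam / r) ≠ 0 := (log_pos (by simp; positivity)).ne'
  refine (((hg.inv hg0).const_mul (log (1 + lam) + ε)).sub (hasDerivAt_id' r)).congr_deriv ?_
  field_simp

theorem deriv_deriv_DeltaEps (hlam : 0 < lam) (hr : 0 < r) :
    deriv (deriv fun r => DeltaEps ε r lam) r =
      -((log (1 + lam) + ε) * lam *
          (log (1 + lam / r) * ((2 * r + lam) * log (1 + lam / r) - 2 * lam))) /
        (r * (r + lam) * log (1 + lam / r) ^ 2) ^ 2 := by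
  have hderiv : deriv (fun r => DeltaEps ε r lam) =ᶠ[𝓝 r] fun r =>
      (log (1 + lam) + ε) * lam / (r * (r + lam) * log (1 + lam / r) ^ 2) - 1 := by
    filter_upwards [Ioi_mem_nhds hr] with x hx
    exact (hasDerivAt_DeltaEps hlam hx).deriv
  have hw0 : r * (r + lam) * log (1 + lam / r) ^ 2 ≠ 0 := by
    have : 0 < log (1 + lam / r) := log_pos (by simp; positivity)
    positivity
  rw [hderiv.deriv_eq]
  refine (((hasDerivAt_const r _).div (hasDerivAt_mul_log_one_add_div_sq hlam hr) hw0).sub_const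
    1).deriv.trans ?_
  ring

theorem deriv_deriv_DeltaEps_neg (hC : 0 < log (1 + lam) + ε) (hlam : 0 < lam) (hr : 0 < r) :
    deriv (deriv fun r => DeltaEps ε r lam) r < 0 := by
  rw [deriv_deriv_DeltaEps hlam hr]
  have hg : 0 < log (1 + lam / r) := log_pos (by simp; positivity)
  have hw' := sub_pos.mpr (two_mul_lt_mul_log_one_add_div hlam hr)
  exact div_neg_of_neg_of_pos (neg_neg_of_pos (by positivity)) (by positivity)

end

/-- For every `ε > 0` and `λ > 0`, `r ↦ Δ_ε(r,λ)` is strictly concave on `(0,1]`;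
in particular its second derivative is strictly negative on `(0,1)`. -/
theorem DeltaEps_strictConcave (ε : ℝ) (hε : 0 < ε) (lam : ℝ) (hlam : 0 < lam) :
    StrictConcaveOn ℝ (Set.Ioc (0 : ℝ) 1) (fun r => DeltaEps ε r lam) ∧
    ∀ r ∈ Set.Ioo (0 : ℝ) 1,
      deriv (deriv (fun r => DeltaEps ε r lam)) r < 0 := by
  have hC : 0 < log (1 + lam) + ε := by
    have := log_nonneg (by linarith : (1 : ℝ) ≤ 1 + lam)
    linarith
  refine ⟨strictConcaveOn_of_deriv2_neg (convex_Ioc 0 1) ?_ ?_, fun r hr =>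
    deriv_deriv_DeltaEps_neg hC hlam hr.1⟩
  · exact fun r hr => (hasDerivAt_DeltaEps hlam hr.1).continuousAt.continuousWithinAt
  · rw [interior_Ioc]
    exact fun r hr => deriv_deriv_DeltaEps_neg hC hlam hr.1
end
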